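/- (Theorem 2, second claim: lower bound on the loss-to-go.) For any n-round dynamic inference model, any contextual loss function ℓ : 𝒳 × 𝒴 × 𝒴̂ → ℝ, any Markov estimation strategy ψⁿ = (ψ₁,…,ψₙ) with ψᵢ : 𝒳 → 𝒴̂, any round i ∈ {1,…,n}, and any observation x ∈ 𝒳, the loss-to-go satisfies Vᵢ(x; ψⁿ) ≥ V*ᵢ(x), where V*ᵢ is defined by the dynamic-programming recursion. -/

import Mathlib

noncomputable section

/-- Expectation of a real-valued function under a probability mass function on a finite type. -/
def pexp {α : Type*} [Fintype α] (p : PMF α) (f : α → ℝ) : ℝ :=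
  ∑ a, (p a).toReal * f a

/-- A (history-dependent) estimation strategy: the round-`i` estimator maps the current
observation `Xᵢ`, the past observations `X^{i-1}` and the past revealed quantities `Y^{i-1}`
(together forming `(X^i, Y^{i-1})`) to an estimate `Ŷᵢ`. -/
abbrev Strategy (𝓧 𝓨 𝓨h : Type*) : Type _ := ℕ → 𝓧 → List 𝓧 → List 𝓨 → 𝓨h

/-- The strategy induced by a sequence of Markov estimators `ψᵢ : 𝓧 → 𝓨h`. -/
def markovStrategy {𝓧 𝓨 𝓨h : Type*} (ψ : ℕ → 𝓧 → 𝓨h) : Strategy 𝓧 𝓨 𝓨h :=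
  fun i x _ _ => ψ i x

/-- Replace the round-`n` estimator of a strategy by another one. -/
def replaceRound {𝓧 𝓨 𝓨h : Type*} (ψ : Strategy 𝓧 𝓨 𝓨h) (n : ℕ)
    (ψn : Strategy 𝓧 𝓨 𝓨h) : Strategy 𝓧 𝓨 𝓨h :=
  fun i x hx hy => if i = n then ψn i x hx hy else ψ i x hx hy

/-- The observation-estimate loss `ℓ̄ᵢ(x, yh) = E_{Y ∼ νᵢ(x)}[ℓ(x, Y, yh)]`. -/
def lbar {𝓧 𝓨 𝓨h : Type*} [Fintype 𝓨] (ν : ℕ → 𝓧 → PMF 𝓨)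
    (ℓ : 𝓧 → 𝓨 → 𝓨h → ℝ) (i : ℕ) (x : 𝓧) (yh : 𝓨h) : ℝ :=
  pexp (ν i x) fun y => ℓ x y yh

/-- `lossFrom κ ν L ψ i m x hx hy` : expected accumulated loss over `m` rounds (rounds
`i, i+1, …, i+m-1`), starting at round `i` with current observation `x`, past observation
history `hx` and past quantity history `hy`, under the (possibly round-dependent) contextual
loss `L` and the strategy `ψ`.  The process evolves as `Yᵢ ∼ νᵢ(Xᵢ)` (conditionally
independent of everything else given `Xᵢ`), `Ŷᵢ = ψᵢ(X^i, Y^{i-1})`,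
`X_{i+1} ∼ κ_{i+1}(Xᵢ, Ŷᵢ)`. -/
def lossFrom {𝓧 𝓨 𝓨h : Type*} [Fintype 𝓧] [Fintype 𝓨]
    (κ : ℕ → 𝓧 → 𝓨h → PMF 𝓧) (ν : ℕ → 𝓧 → PMF 𝓨)
    (L : ℕ → 𝓧 → 𝓨 → 𝓨h → ℝ) (ψ : Strategy 𝓧 𝓨 𝓨h) :
    ℕ → ℕ → 𝓧 → List 𝓧 → List 𝓨 → ℝ
  | _, 0, _, _, _ => 0
  | i, m + 1, x, hx, hy =>
      pexp (ν i x) fun y =>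
        L i x y (ψ i x hx hy) +
          pexp (κ (i + 1) x (ψ i x hx hy)) fun x' =>
            lossFrom κ ν L ψ (i + 1) m x' (hx ++ [x]) (hy ++ [y])

/-- The inference loss `J(ψ) = E[∑_{i=1}^n ℓ(Xᵢ, Yᵢ, Ŷᵢ)]` of strategy `ψ` for the
`n`-round dynamic inference problem with initial distribution `P₁`. -/
def J {𝓧 𝓨 𝓨h : Type*} [Fintype 𝓧] [Fintype 𝓨] (P₁ : PMF 𝓧)
    (κ : ℕ → 𝓧 → 𝓨h → PMF 𝓧) (ν : ℕ → 𝓧 → PMF 𝓨)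
    (ℓ : 𝓧 → 𝓨 → 𝓨h → ℝ) (n : ℕ) (ψ : Strategy 𝓧 𝓨 𝓨h) : ℝ :=
  pexp P₁ fun x => lossFrom κ ν (fun _ => ℓ) ψ 1 n x [] []

/-- `Eat κ ν g ψ i s x hx hy` : the expectation `E[g(X_{i+s}, Y_{i+s}, Ŷ_{i+s})]` of a
single-round quantity at round `i + s`, for the process started at round `i` with current
observation `x` and histories `hx`, `hy`, run under the strategy `ψ`. -/
def Eat {𝓧 𝓨 𝓨h : Type*} [Fintype 𝓧] [Fintype 𝓨]
    (κ : ℕ → 𝓧 → 𝓨h → PMF 𝓧) (ν : ℕ → 𝓧 → PMF 𝓨)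
    (g : 𝓧 → 𝓨 → 𝓨h → ℝ) (ψ : Strategy 𝓧 𝓨 𝓨h) :
    ℕ → ℕ → 𝓧 → List 𝓧 → List 𝓨 → ℝ
  | i, 0, x, hx, hy => pexp (ν i x) fun y => g x y (ψ i x hx hy)
  | i, s + 1, x, hx, hy =>
      pexp (ν i x) fun y =>
        pexp (κ (i + 1) x (ψ i x hx hy)) fun x' =>
          Eat κ ν g ψ (i + 1) s x' (hx ++ [x]) (hy ++ [y])

/-- The dynamic-programming value function: `Vstar κ ν ℓ i m x` is `V*ᵢ(x)` when exactly `m`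
rounds follow round `i` (so round `i` is the last round iff `m = 0`):
`V*ᵢ(x) = min_{yh} Q*ᵢ(x, yh)`, with `Q*` as in `Qstar`. -/
def Vstar {𝓧 𝓨 𝓨h : Type*} [Fintype 𝓧] [Fintype 𝓨]
    (κ : ℕ → 𝓧 → 𝓨h → PMF 𝓧) (ν : ℕ → 𝓧 → PMF 𝓨)
    (ℓ : 𝓧 → 𝓨 → 𝓨h → ℝ) : ℕ → ℕ → 𝓧 → ℝ
  | i, 0, x => ⨅ yh, lbar ν ℓ i x yh
  | i, m + 1, x =>
      ⨅ yh, (lbar ν ℓ i x yh + pexp (κ (i + 1) x yh) fun x' => Vstar κ ν ℓ (i + 1) m x')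

/-- The dynamic-programming Q-function: `Qstar κ ν ℓ i m x yh` is `Q*ᵢ(x, yh)` when exactly `m`
rounds follow round `i`: `Q*ₙ(x,yh) = ℓ̄ₙ(x,yh)` in the last round, and otherwise
`Q*ᵢ(x,yh) = ℓ̄ᵢ(x,yh) + E_{x' ∼ κ_{i+1}(x,yh)}[V*_{i+1}(x')]`. -/
def Qstar {𝓧 𝓨 𝓨h : Type*} [Fintype 𝓧] [Fintype 𝓨]
    (κ : ℕ → 𝓧 → 𝓨h → PMF 𝓧) (ν : ℕ → 𝓧 → PMF 𝓨)
    (ℓ : 𝓧 → 𝓨 → 𝓨h → ℝ) : ℕ → ℕ → 𝓧 → 𝓨h → ℝ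
  | i, 0, x, yh => lbar ν ℓ i x yh
  | i, m + 1, x, yh =>
      lbar ν ℓ i x yh + pexp (κ (i + 1) x yh) fun x' => Vstar κ ν ℓ (i + 1) m x'

/-! Backward induction on the number of remaining rounds. A Markov strategy's loss-to-go does not
depend on the history, so it obeys the recursion of `Q*` with `V*ᵢ₊₁` replaced by the strategy's
own loss-to-go; the latter dominates `V*ᵢ₊₁` by induction, and `V*ᵢ ≤ Q*ᵢ(x, ψᵢ x)`. -/

section pexp

variable {α : Type*} [Fintype α] (p : PMF α)

lemma pexp_mono {f g : α → ℝ} (h : ∀ a, f a ≤ g a) : pexp p f ≤ pexp p g :=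
  Finset.sum_le_sum fun a _ => mul_le_mul_of_nonneg_left (h a) ENNReal.toReal_nonneg

lemma pexp_const (c : ℝ) : pexp p (fun _ => c) = c := by
  have hsum : ∑ a, (p a).toReal = 1 := by
    have h := p.tsum_coe
    rw [tsum_fintype] at h
    rw [← ENNReal.toReal_sum fun a _ => p.apply_ne_top a, h, ENNReal.toReal_one]
  rw [pexp, ← Finset.sum_mul, hsum, one_mul]

lemma pexp_add (f g : α → ℝ) : pexp p (fun a => f a + g a) = pexp p f + pexp p g := by
  simp only [pexp, mul_add, Finset.sum_add_distrib]

end pexp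

section markov

variable {𝓧 𝓨 𝓨h : Type*} [Fintype 𝓧] [Fintype 𝓨]
  (κ : ℕ → 𝓧 → 𝓨h → PMF 𝓧) (ν : ℕ → 𝓧 → PMF 𝓨) (ψ : ℕ → 𝓧 → 𝓨h)

lemma lossFrom_markovStrategy_history_indep (L : ℕ → 𝓧 → 𝓨 → 𝓨h → ℝ) (m : ℕ) :
    ∀ i x hx hy hx' hy', lossFrom κ ν L (markovStrategy ψ) i m x hx hy =
      lossFrom κ ν L (markovStrategy ψ) i m x hx' hy' := by
  induction m with
  | zero => intros; rfl
  | succ m ih =>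
    intro i x hx hy hx' hy'
    simp only [lossFrom, markovStrategy]
    congr! 5 with y x'
    exact ih ..

lemma lossFrom_markovStrategy_succ (L : ℕ → 𝓧 → 𝓨 → 𝓨h → ℝ) (i m : ℕ) (x : 𝓧) :
    lossFrom κ ν L (markovStrategy ψ) i (m + 1) x [] [] =
      lbar ν (L i) i x (ψ i x) +
        pexp (κ (i + 1) x (ψ i x)) fun x' => lossFrom κ ν L (markovStrategy ψ) (i + 1) m x' [] [] := by
  simp only [lossFrom, markovStrategy]
  rw [pexp_add]
  congr 1
  rw [← pexp_const (ν i x) (pexp (κ (i + 1) x (ψ i x)) _)]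
  congr! 3 with y
  funext x'
  exact lossFrom_markovStrategy_history_indep κ ν ψ L ..

variable [Fintype 𝓨h] (ℓ : 𝓧 → 𝓨 → 𝓨h → ℝ)

lemma Vstar_le_Qstar (i m : ℕ) (x : 𝓧) (yh : 𝓨h) : Vstar κ ν ℓ i m x ≤ Qstar κ ν ℓ i m x yh := by
  cases m <;> exact ciInf_le (Set.finite_range _).bddBelow yh

lemma Vstar_le_lossFrom_markovStrategy (m : ℕ) :
    ∀ i x, Vstar κ ν ℓ i m x ≤ lossFrom κ ν (fun _ => ℓ) (markovStrategy ψ) i (m + 1) x [] [] := by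
  induction m with
  | zero =>
    intro i x
    rw [lossFrom_markovStrategy_succ]
    simpa only [lossFrom, pexp_const, add_zero, Qstar] using Vstar_le_Qstar κ ν ℓ i 0 x (ψ i x)
  | succ m ih =>
    intro i x
    calc Vstar κ ν ℓ i (m + 1) x ≤ Qstar κ ν ℓ i (m + 1) x (ψ i x) := Vstar_le_Qstar ..
      _ ≤ _ := by
        rw [lossFrom_markovStrategy_succ]
        exact add_le_add_right (pexp_mono _ fun x' => ih (i + 1) x') _

end markov

theorem loss_to_go_ge_Vstar_general {𝓧 𝓨 𝓨h : Type*} [Fintype 𝓧] [Fintype 𝓨]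
    [Fintype 𝓨h]
    (κ : ℕ → 𝓧 → 𝓨h → PMF 𝓧) (ν : ℕ → 𝓧 → PMF 𝓨)
    (ℓ : 𝓧 → 𝓨 → 𝓨h → ℝ) (ψ : ℕ → 𝓧 → 𝓨h) (n i : ℕ) (x : 𝓧) :
    lossFrom κ ν (fun _ => ℓ) (markovStrategy ψ) i (n - i + 1) x [] [] ≥ Vstar κ ν ℓ i (n - i) x :=
  Vstar_le_lossFrom_markovStrategy κ ν ψ ℓ (n - i) i x

/-- **Theorem 2, second claim: lower bound on the loss-to-go.** For any
`n`-round dynamic inference model, contextual loss `ℓ`, Markov estimation strategy `ψ`,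
round `i ∈ {1,…,n}` and observation `x`, the loss-to-go
`Vᵢ(x; ψ) = E[∑_{j=i}^n ℓ(Xⱼ, Yⱼ, Ŷⱼ) | Xᵢ = x]` (the expected accumulated loss of the
process started at `Xᵢ = x` and run under `ψ` for the remaining `n - i + 1` rounds) is at
least the dynamic-programming value `V*ᵢ(x)`. -/
theorem loss_to_go_ge_Vstar {𝓧 𝓨 𝓨h : Type*} [Fintype 𝓧] [Nonempty 𝓧] [Fintype 𝓨] [Nonempty 𝓨]
    [Fintype 𝓨h] [Nonempty 𝓨h]
    (P₁ : PMF 𝓧) (κ : ℕ → 𝓧 → 𝓨h → PMF 𝓧) (ν : ℕ → 𝓧 → PMF 𝓨)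
    (ℓ : 𝓧 → 𝓨 → 𝓨h → ℝ) (ψ : ℕ → 𝓧 → 𝓨h) (n i : ℕ) (hi1 : 1 ≤ i) (hin : i ≤ n) (x : 𝓧) :
    lossFrom κ ν (fun _ => ℓ) (markovStrategy ψ) i (n - i + 1) x [] [] ≥ Vstar κ ν ℓ i (n - i) x :=
  loss_to_go_ge_Vstar_general κ ν ℓ ψ n i x

end
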